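/- Let m walks fail at time tau, each contributing a survival estimate uniformly distributed on [0, exp(-lambda (t - tau))] at time t >= tau, independent of a active walks each contributing a uniform(0,1) estimate. For any eps with 0 < eps < theta - 1/2, the probability that the total estimate (excluding the visiting walk's 1/2) is below theta - 1/2 is at least F_IH_{a-1}(eps) * F_IH_m((theta - eps - 1/2) * exp(lambda (t - tau))), where F_IH_k denotes the Irwin-Hall CDF of k standard uniforms. -/

import Mathlib

/-
The Irwin–Hall CDF extends to all of ℝ as the `k`-th backward difference (step 1) of the
truncated power `x₊^k / k!`. Averaging over a unit shift, `g ↦ ∫₀¹ g (· - u) du`, commutes with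
differences and sends `x₊^k / k!` to the first backward difference of `x₊^(k+1) / (k+1)!`, so this
function satisfies `F_{k+1} x = ∫₀¹ F_k (x - u) du`, the recursion of the law of a sum of
independent standard uniforms. After rescaling by `exp (λ (t - τ))` the failed walks' estimates are
standard uniforms too, and the event contains `{active sum ≤ ε} ∩ {failed sum ≤ θ - ε - 1/2}`,
whose probability factorises by independence.
-/

open MeasureTheory ProbabilityTheory Real

/-- The Irwin–Hall CDF (distribution of the sum of `k` i.i.d. standard uniforms). -/
noncomputable def irwinHallCDF (k : ℕ) (σ : ℝ) : ℝ :=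
  if σ < 0 then 0
  else if σ ≤ (k : ℝ) then
    (1 / (Nat.factorial k : ℝ)) *
      ∑ τ ∈ Finset.range (⌊σ⌋₊ + 1), (-1 : ℝ) ^ τ * (k.choose τ) * (σ - τ) ^ k
  else 1

open Finset fwdDiff

noncomputable def truncatedPow (k : ℕ) (x : ℝ) : ℝ :=
  if x < 0 then 0 else x ^ k / k.factorial

lemma truncatedPow_nonneg (k : ℕ) (x : ℝ) : 0 ≤ truncatedPow k x := by
  unfold truncatedPow; split_ifs with hx
  · rfl
  · exact div_nonneg (pow_nonneg (not_lt.1 hx) k) (Nat.cast_nonneg _)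

lemma truncatedPow_monotone (k : ℕ) : Monotone (truncatedPow k) := by
  intro x y hxy
  by_cases hx : x < 0
  · simpa [truncatedPow, hx] using truncatedPow_nonneg k y
  · have hy : ¬ y < 0 := by linarith
    simp only [truncatedPow, hx, hy, if_false]
    gcongr
    linarith

lemma intervalIntegrable_truncatedPow (k : ℕ) (a b : ℝ) :
    IntervalIntegrable (truncatedPow k) volume a b :=
  (truncatedPow_monotone k).intervalIntegrable

lemma truncatedPow_succ (k : ℕ) (x : ℝ) :
    truncatedPow (k + 1) x = max x 0 ^ (k + 1) / (k + 1).factorial := by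
  unfold truncatedPow; split_ifs with hx
  · simp [max_eq_right hx.le]
  · rw [max_eq_left (not_lt.1 hx)]

lemma continuous_truncatedPow_succ (k : ℕ) : Continuous (truncatedPow (k + 1)) := by
  simp_rw [funext (truncatedPow_succ k)]
  fun_prop

lemma hasDerivWithinAt_truncatedPow_succ (k : ℕ) (x : ℝ) :
    HasDerivWithinAt (truncatedPow (k + 1)) (truncatedPow k x) (Set.Ioi x) x := by
  by_cases hx : x < 0
  · have hzero : truncatedPow (k + 1) =ᶠ[nhds x] fun _ => 0 :=
      (gt_mem_nhds hx).mono fun y hy => if_pos hy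
    rw [truncatedPow, if_pos hx]
    exact ((hasDerivAt_const x 0).congr_of_eventuallyEq hzero).hasDerivWithinAt
  · have hpoly : HasDerivAt (fun y : ℝ => y ^ (k + 1) / (k + 1).factorial)
        (x ^ k / k.factorial) x := by
      refine ((hasDerivAt_pow (k + 1) x).div_const _).congr_deriv ?_
      rw [Nat.factorial_succ, Nat.add_sub_cancel]
      push_cast
      field_simp
    refine hpoly.hasDerivWithinAt.congr (fun y hy => ?_) ?_ |>.congr_deriv ?_
    · exact if_neg (by linarith [Set.mem_Ioi.1 hy])
    · exact if_neg hx
    · exact (if_neg hx).symm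

lemma integral_truncatedPow_sub (k : ℕ) (y : ℝ) :
    ∫ u in (0 : ℝ)..1, truncatedPow k (y - u) =
      truncatedPow (k + 1) y - truncatedPow (k + 1) (y - 1) := by
  rw [intervalIntegral.integral_comp_sub_left (truncatedPow k), sub_zero,
    intervalIntegral.integral_eq_sub_of_hasDeriv_right
      (continuous_truncatedPow_succ k).continuousOn
      (fun x _ => hasDerivWithinAt_truncatedPow_succ k x)
      (intervalIntegrable_truncatedPow k _ _)]

section ForwardDifference

variable {f : ℝ → ℝ}

lemma intervalIntegrable_fwdDiff (hf : ∀ a b, IntervalIntegrable f volume a b) (h a b : ℝ) :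
    IntervalIntegrable (Δ_[h] f) volume a b := by
  have hshift := (hf (a + h) (b + h)).comp_add_right h
  simp only [add_sub_cancel_right] at hshift
  exact hshift.sub (hf a b)

lemma intervalIntegrable_fwdDiff_iter (hf : ∀ a b, IntervalIntegrable f volume a b) (h : ℝ)
    (n : ℕ) (a b : ℝ) : IntervalIntegrable ((Δ_[h])^[n] f) volume a b := by
  induction n generalizing a b with
  | zero => exact hf a b
  | succ n ih =>
    rw [Function.iterate_succ_apply']
    exact intervalIntegrable_fwdDiff ih h a b

lemma integral_fwdDiff_iter_comp_sub (hf : ∀ a b, IntervalIntegrable f volume a b)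
    (h : ℝ) (n : ℕ) (a b y : ℝ) :
    ∫ u in a..b, (Δ_[h])^[n] f (y - u) = (Δ_[h])^[n] (fun z => ∫ u in a..b, f (z - u)) y := by
  induction n generalizing f with
  | zero => rfl
  | succ n ih =>
    rw [Function.iterate_succ_apply, Function.iterate_succ_apply,
      ih (intervalIntegrable_fwdDiff hf h)]
    suffices hcomm : (fun z => ∫ u in a..b, Δ_[h] f (z - u)) =
        Δ_[h] (fun z => ∫ u in a..b, f (z - u)) by rw [hcomm]
    have hreflect (c : ℝ) : IntervalIntegrable (fun u => f (c - u)) volume a b := by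
      simpa using (hf (c - a) (c - b)).comp_sub_left c
    funext z
    simp only [fwdDiff]
    rw [← intervalIntegral.integral_sub (hreflect _) (hreflect _)]
    simp_rw [sub_add_eq_add_sub]

end ForwardDifference

noncomputable def irwinHallTruncCDF (k : ℕ) (x : ℝ) : ℝ :=
  (Δ_[1])^[k] (truncatedPow k) (x - k)

lemma irwinHallTruncCDF_zero (x : ℝ) : irwinHallTruncCDF 0 x = if x < 0 then 0 else 1 := by
  simp [irwinHallTruncCDF, truncatedPow]

lemma intervalIntegrable_irwinHallTruncCDF (k : ℕ) (a b : ℝ) :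
    IntervalIntegrable (irwinHallTruncCDF k) volume a b := by
  have h := (intervalIntegrable_fwdDiff_iter (intervalIntegrable_truncatedPow k) 1 k
    (a - k) (b - k)).comp_sub_right k
  rwa [sub_add_cancel, sub_add_cancel] at h

lemma integral_irwinHallTruncCDF_sub (k : ℕ) (x : ℝ) :
    ∫ u in (0 : ℝ)..1, irwinHallTruncCDF k (x - u) = irwinHallTruncCDF (k + 1) x := by
  calc ∫ u in (0 : ℝ)..1, irwinHallTruncCDF k (x - u)
      = ∫ u in (0 : ℝ)..1, (Δ_[1])^[k] (truncatedPow k) (x - k - u) := by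
        simp only [irwinHallTruncCDF, sub_right_comm]
    _ = (Δ_[1])^[k] (fun z => Δ_[1] (truncatedPow (k + 1)) (z + -1)) (x - k) := by
        rw [integral_fwdDiff_iter_comp_sub (intervalIntegrable_truncatedPow k)]
        simp only [integral_truncatedPow_sub, fwdDiff, ← sub_eq_add_neg, sub_add_cancel]
    _ = irwinHallTruncCDF (k + 1) x := by
        rw [fwdDiff_iter_comp_add, irwinHallTruncCDF, Function.iterate_succ_apply]
        push_cast
        ring_nf

lemma irwinHallTruncCDF_nonneg (k : ℕ) (x : ℝ) : 0 ≤ irwinHallTruncCDF k x := by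
  induction k generalizing x with
  | zero => rw [irwinHallTruncCDF_zero]; split_ifs <;> norm_num
  | succ k ih =>
    rw [← integral_irwinHallTruncCDF_sub]
    exact intervalIntegral.integral_nonneg zero_le_one fun u _ => ih _

lemma irwinHallTruncCDF_eq_sum (k : ℕ) (x : ℝ) :
    irwinHallTruncCDF k x =
      ∑ j ∈ range (k + 1), (-1 : ℝ) ^ j * k.choose j * truncatedPow k (x - j) := by
  rw [irwinHallTruncCDF, fwdDiff_iter_eq_sum_shift, ← sum_range_reflect]
  refine sum_congr rfl fun j hj => ?_
  have hjk : j ≤ k := Nat.lt_succ_iff.1 (mem_range.1 hj)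
  rw [Nat.add_sub_cancel, Nat.sub_sub_self hjk, Nat.choose_symm hjk, nsmul_eq_mul, mul_one,
    Nat.cast_sub hjk, zsmul_eq_mul]
  push_cast
  ring_nf

lemma irwinHallCDF_eq_irwinHallTruncCDF (k : ℕ) {x : ℝ} (h0 : 0 ≤ x) (hk : x ≤ k) :
    irwinHallCDF k x = irwinHallTruncCDF k x := by
  have hfloor : ⌊x⌋₊ ≤ k := Nat.floor_le_of_le hk
  rw [irwinHallCDF, if_neg (not_lt.2 h0), if_pos hk, irwinHallTruncCDF_eq_sum, mul_sum,
    ← sum_subset (range_subset_range.2 (Nat.succ_le_succ hfloor))]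
  · refine sum_congr rfl fun j hj => ?_
    have hjx : (j : ℝ) ≤ x := (Nat.le_floor_iff h0).1 (Nat.lt_succ_iff.1 (mem_range.1 hj))
    rw [truncatedPow, if_neg (by linarith)]
    ring
  · intro j _ hj
    have hxj : x - j < 0 := by
      have := (Nat.floor_lt h0).1 (by simpa using hj)
      linarith
    simp [truncatedPow, hxj]

lemma irwinHallCDF_nonneg (k : ℕ) (x : ℝ) : 0 ≤ irwinHallCDF k x := by
  rcases lt_or_ge x 0 with h0 | h0
  · simp [irwinHallCDF, h0]
  rcases le_or_gt x k with hk | hk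
  · exact irwinHallCDF_eq_irwinHallTruncCDF k h0 hk ▸ irwinHallTruncCDF_nonneg k x
  · simp [irwinHallCDF, not_lt.2 h0, not_le.2 hk]

section Probability

variable {Ω : Type*} [MeasurableSpace Ω] {μ : Measure Ω}

lemma ProbabilityTheory.IndepFun.measure_add_le_eq_lintegral [IsFiniteMeasure μ] {T U : Ω → ℝ}
    (hT : Measurable T) (hU : Measurable U) (hTU : IndepFun T U μ) (x : ℝ) :
    μ {ω | T ω + U ω ≤ x} = ∫⁻ u, μ {ω | T ω ≤ x - u} ∂(μ.map U) := by
  have hS : MeasurableSet {p : ℝ × ℝ | p.1 + p.2 ≤ x} :=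
    measurableSet_le (measurable_fst.add measurable_snd) measurable_const
  rw [show {ω | T ω + U ω ≤ x} = (fun ω => (T ω, U ω)) ⁻¹' {p | p.1 + p.2 ≤ x} from rfl,
    ← Measure.map_apply (hT.prodMk hU) hS,
    (indepFun_iff_map_prod_eq_prod_map_map hT.aemeasurable hU.aemeasurable).1 hTU,
    Measure.prod_apply_symm hS]
  refine lintegral_congr fun u => ?_
  have hslice : (fun t => (t, u)) ⁻¹' {p : ℝ × ℝ | p.1 + p.2 ≤ x} = Set.Iic (x - u) := by
    ext t
    simp [le_sub_iff_add_le]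
  rw [hslice, Measure.map_apply hT measurableSet_Iic]
  rfl

lemma measure_sum_le_eq_irwinHallTruncCDF [IsProbabilityMeasure μ] {ι : Type*}
    {Y : ι → Ω → ℝ} (hY : ∀ i, Measurable (Y i)) (hind : iIndepFun Y μ) (s : Finset ι)
    (hunif : ∀ i ∈ s, μ.map (Y i) = volume.restrict (Set.Icc 0 1)) (x : ℝ) :
    μ {ω | ∑ i ∈ s, Y i ω ≤ x} = ENNReal.ofReal (irwinHallTruncCDF s.card x) := by
  classical
  induction s using Finset.induction_on generalizing x with
  | empty =>
    rw [card_empty, irwinHallTruncCDF_zero]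
    split_ifs with hx
    · simp [not_le.2 hx]
    · simp [not_lt.1 hx]
  | insert a s ha ih =>
    have hind_sum : IndepFun (fun ω => ∑ i ∈ s, Y i ω) (Y a) μ := by
      simpa only [← Finset.sum_apply] using hind.indepFun_finsetSum_of_notMem hY ha
    have hcdf : ∀ u ∈ Set.Icc (0 : ℝ) 1,
        μ {ω | ∑ i ∈ s, Y i ω ≤ x - u} = ENNReal.ofReal (irwinHallTruncCDF s.card (x - u)) :=
      fun u _ => ih (fun i hi => hunif i (mem_insert_of_mem hi)) (x - u)
    simp_rw [sum_insert ha, add_comm (Y a _)]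
    rw [hind_sum.measure_add_le_eq_lintegral (Finset.measurable_sum _ fun i _ => hY i) (hY a),
      hunif a (mem_insert_self a s), setLIntegral_congr_fun measurableSet_Icc hcdf,
      ← ofReal_integral_eq_lintegral_ofReal, card_insert_of_notMem ha,
      ← integral_irwinHallTruncCDF_sub, intervalIntegral.integral_of_le zero_le_one,
      integral_Icc_eq_integral_Ioc]
    · have hint : IntervalIntegrable (fun u => irwinHallTruncCDF s.card (x - u)) volume 0 1 := by
        simpa using (intervalIntegrable_irwinHallTruncCDF s.card (x - 0) (x - 1)).comp_sub_left x
      exact (integrableOn_Icc_iff_integrableOn_Ioc).2 hint.1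
    · exact Filter.Eventually.of_forall fun u => irwinHallTruncCDF_nonneg _ _

lemma measure_sum_le_eq_one [IsProbabilityMeasure μ] {ι : Type*} {Y : ι → Ω → ℝ}
    (hY : ∀ i, Measurable (Y i)) (s : Finset ι)
    (hunif : ∀ i ∈ s, μ.map (Y i) = volume.restrict (Set.Icc 0 1)) {x : ℝ} (hx : s.card ≤ x) :
    μ {ω | ∑ i ∈ s, Y i ω ≤ x} = 1 := by
  have hle_one : ∀ᵐ ω ∂μ, ∀ i ∈ s, Y i ω ≤ 1 := by
    refine (Filter.eventually_all_finset s).2 fun i hi => ?_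
    refine ae_of_ae_map (p := fun y => y ≤ 1) (hY i).aemeasurable ?_
    rw [hunif i hi]
    exact (ae_restrict_mem measurableSet_Icc).mono fun y hy => hy.2
  rw [← measure_univ (μ := μ), ← ae_iff_measure_eq
    (measurableSet_le (Finset.measurable_sum _ fun i _ => hY i) measurable_const).nullMeasurableSet]
  filter_upwards [hle_one] with ω hω
  calc ∑ i ∈ s, Y i ω ≤ ∑ _i ∈ s, (1 : ℝ) := sum_le_sum hω
    _ ≤ x := by simpa using hx

theorem irwinHallCDF_le_measure_sum_le [IsProbabilityMeasure μ] {ι : Type*}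
    {Y : ι → Ω → ℝ} (hY : ∀ i, Measurable (Y i)) (hind : iIndepFun Y μ) (s : Finset ι)
    (hunif : ∀ i ∈ s, μ.map (Y i) = volume.restrict (Set.Icc 0 1)) (x : ℝ) :
    irwinHallCDF s.card x ≤ (μ {ω | ∑ i ∈ s, Y i ω ≤ x}).toReal := by
  rcases lt_or_ge x 0 with h0 | h0
  · simp [irwinHallCDF, h0]
  rcases le_or_gt x s.card with hk | hk
  · rw [measure_sum_le_eq_irwinHallTruncCDF hY hind s hunif,
      ENNReal.toReal_ofReal (irwinHallTruncCDF_nonneg _ _),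
      irwinHallCDF_eq_irwinHallTruncCDF _ h0 hk]
  · simp [irwinHallCDF, not_lt.2 h0, not_le.2 hk, measure_sum_le_eq_one hY s hunif hk.le]

lemma map_inv_mul_eq_restrict_Icc_zero_one {V : Ω → ℝ} (hV : Measurable V) {c : ℝ}
    (hc : 0 < c) (hmap : μ.map V = (ENNReal.ofReal c)⁻¹ • volume.restrict (Set.Icc 0 c)) :
    μ.map (fun ω => c⁻¹ * V ω) = volume.restrict (Set.Icc 0 1) := by
  have hpre : Set.Icc 0 c = (fun y => c⁻¹ * y) ⁻¹' Set.Icc 0 1 := by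
    rw [Set.preimage_const_mul_Icc₀ _ _ (inv_pos.2 hc)]
    simp
  change μ.map ((fun y => c⁻¹ * y) ∘ V) = _
  rw [← Measure.map_map (measurable_const_mul c⁻¹) hV, hmap, Measure.map_smul, hpre,
    ← Measure.restrict_map (measurable_const_mul c⁻¹) measurableSet_Icc,
    Real.map_volume_mul_left (inv_ne_zero hc.ne'), inv_inv, abs_of_pos hc,
    Measure.restrict_smul, smul_smul,
    ENNReal.inv_mul_cancel (ENNReal.ofReal_pos.2 hc).ne' ENNReal.ofReal_ne_top, one_smul]

lemma ProbabilityTheory.iIndepFun.indepFun_sum_inl_sum_inr {ι κ : Type*} [Fintype ι]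
    [Fintype κ] {X : ι ⊕ κ → Ω → ℝ} (hX : ∀ i, Measurable (X i)) (hind : iIndepFun X μ) :
    IndepFun (fun ω => ∑ i, X (.inl i) ω) (fun ω => ∑ j, X (.inr j) ω) μ := by
  have hsum (S : Finset (ι ⊕ κ)) : Measurable fun v : S → ℝ => ∑ i, v i :=
    Finset.measurable_sum _ fun i _ => measurable_pi_apply i
  convert (hind.indepFun_finset _ _ (Finset.disjoint_map_inl_map_inr univ univ) hX).comp
    (hsum _) (hsum _) using 1 <;>
  · funext ω
    simp only [Function.comp_apply, Finset.sum_coe_sort _ (fun i => X i ω), Finset.sum_map]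
    rfl

lemma ProbabilityTheory.IndepFun.toReal_measure_le_mul_le [IsFiniteMeasure μ] {U V : Ω → ℝ}
    (hUV : IndepFun U V μ) (a b : ℝ) :
    (μ {ω | U ω ≤ a}).toReal * (μ {ω | V ω ≤ b}).toReal ≤ (μ {ω | U ω + V ω ≤ a + b}).toReal := by
  change (μ (U ⁻¹' Set.Iic a)).toReal * (μ (V ⁻¹' Set.Iic b)).toReal ≤ _
  rw [← ENNReal.toReal_mul, ← hUV.measure_inter_preimage_eq_mul _ _ measurableSet_Iic
    measurableSet_Iic]
  exact ENNReal.toReal_mono (measure_ne_top μ _)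
    (measure_mono fun ω hω => show U ω + V ω ≤ a + b from add_le_add hω.1 hω.2)

end Probability

theorem failure_detection_probability_general
    {Ω : Type*} [MeasurableSpace Ω] (μP : Measure Ω) [IsProbabilityMeasure μP]
    (a m : ℕ) (lam τ t θ ε : ℝ)
    (X : (Fin (a - 1) ⊕ Fin m) → Ω → ℝ) (hmeas : ∀ i, Measurable (X i))
    (hindep : iIndepFun X μP)
    (hunifU : ∀ i : Fin (a - 1), Measure.map (X (Sum.inl i)) μP =
      volume.restrict (Set.Icc (0 : ℝ) 1))
    (hunifV : ∀ j : Fin m, Measure.map (X (Sum.inr j)) μP =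
      (ENNReal.ofReal (exp (-lam * (t - τ))))⁻¹ •
        volume.restrict (Set.Icc (0 : ℝ) (exp (-lam * (t - τ))))) :
    irwinHallCDF (a - 1) ε * irwinHallCDF m ((θ - ε - 1 / 2) * exp (lam * (t - τ)))
      ≤ (μP {ω | (∑ i, X (Sum.inl i) ω) + ∑ j, X (Sum.inr j) ω ≤ θ - 1 / 2}).toReal := by
  set c := exp (-lam * (t - τ))
  have hc : 0 < c := exp_pos _
  have hc_inv : exp (lam * (t - τ)) = c⁻¹ := by rw [← exp_neg, neg_mul, neg_neg]
  have hactive := irwinHallCDF_le_measure_sum_le (fun i => hmeas _)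
    (hindep.precomp Sum.inl_injective) univ (fun i _ => hunifU i) ε
  have hfailed := irwinHallCDF_le_measure_sum_le (fun j => (hmeas _).const_mul c⁻¹)
    ((hindep.precomp Sum.inr_injective).comp (fun _ y => c⁻¹ * y)
      fun _ => measurable_const_mul _) univ
    (fun j _ => map_inv_mul_eq_restrict_Icc_zero_one (hmeas _) hc (hunifV j))
    ((θ - ε - 1 / 2) * c⁻¹)
  have hrescale : ∀ ω, ∑ j, c⁻¹ * X (.inr j) ω ≤ (θ - ε - 1 / 2) * c⁻¹ ↔
      ∑ j, X (.inr j) ω ≤ θ - ε - 1 / 2 := fun ω => by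
    rw [← mul_sum, mul_comm, mul_le_mul_iff_left₀ (inv_pos.2 hc)]
  simp only [card_univ, Fintype.card_fin, hrescale] at hactive hfailed
  rw [hc_inv]
  calc _ ≤ (μP {ω | ∑ i, X (.inl i) ω ≤ ε}).toReal *
        (μP {ω | ∑ j, X (.inr j) ω ≤ θ - ε - 1 / 2}).toReal :=
        mul_le_mul hactive hfailed (irwinHallCDF_nonneg _ _) ENNReal.toReal_nonneg
    _ ≤ (μP {ω | ∑ i, X (.inl i) ω + ∑ j, X (.inr j) ω ≤ ε + (θ - ε - 1 / 2)}).toReal :=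
        (hindep.indepFun_sum_inl_sum_inr hmeas).toReal_measure_le_mul_le _ _
    _ = _ := by ring_nf

/-- **Lower bound on the forking-detection probability after a failure.**
`m` walks fail at time `τ`; at time `t ≥ τ` each contributes a survival estimate
uniform on `[0, exp (-λ (t - τ))]`, independent of `a - 1` remaining active walks
(excluding the visiting one), each contributing a uniform `(0,1)` estimate.  For any
`0 < ε < θ - 1/2`, the probability that the total estimate is below `θ - 1/2` is at
least `F_IH_{a-1}(ε) * F_IH_m((θ - ε - 1/2) exp (λ (t - τ)))`. -/
theorem failure_detection_probability
    {Ω : Type*} [MeasurableSpace Ω] (μP : Measure Ω) [IsProbabilityMeasure μP]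
    (a m : ℕ) (ha : 1 ≤ a) (lam τ t θ ε : ℝ) (hlam : 0 < lam) (hτ : τ ≤ t)
    (hε : 0 < ε) (hεθ : ε < θ - 1 / 2)
    (X : (Fin (a - 1) ⊕ Fin m) → Ω → ℝ) (hmeas : ∀ i, Measurable (X i))
    (hindep : iIndepFun X μP)
    (hunifU : ∀ i : Fin (a - 1), Measure.map (X (Sum.inl i)) μP =
      volume.restrict (Set.Icc (0 : ℝ) 1))
    (hunifV : ∀ j : Fin m, Measure.map (X (Sum.inr j)) μP =
      (ENNReal.ofReal (exp (-lam * (t - τ))))⁻¹ •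
        volume.restrict (Set.Icc (0 : ℝ) (exp (-lam * (t - τ))))) :
    irwinHallCDF (a - 1) ε * irwinHallCDF m ((θ - ε - 1 / 2) * exp (lam * (t - τ)))
      ≤ (μP {ω | (∑ i, X (Sum.inl i) ω) + ∑ j, X (Sum.inr j) ω ≤ θ - 1 / 2}).toReal :=
  failure_detection_probability_general μP a m lam τ t θ ε X hmeas hindep hunifU hunifV
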